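/- arXiv:0901.1649 — 5 statements merged into one kernel-verified Lean document; each statement's English description precedes it below -/
import Mathlib

section
/- Let F be an algebraically closed field of odd characteristic and G = F × F. Then G has a perfect basis: there exists S ⊆ G such that every element of G has exactly one representation as a sum of two elements of S, up to the order of summands. -/
/-- `F × F` has a perfect basis for `F` algebraically closed of odd
characteristic: some `S` such that every element has exactly one representation
as a sum of two elements of `S`, up to order of summands. -/
theorem stmt_1 {F : Type*} [Field F] [IsAlgClosed F] (p : ℕ) [CharP F p]
    (hp : p.Prime) (hodd : Odd p) :
    ∃ S : Set (F × F), ∀ g : F × F,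
      (∃ s ∈ S, ∃ t ∈ S, s + t = g) ∧
      (∀ s ∈ S, ∀ t ∈ S, ∀ s' ∈ S, ∀ t' ∈ S, s + t = g → s' + t' = g →
        (s' = s ∧ t' = t) ∨ (s' = t ∧ t' = s)) := by
  have hp2 : p ≠ 2 := by
    rintro rfl
    exact (Nat.not_odd_iff_even.mpr (by decide)) hodd
  have h2 : (2 : F) ≠ 0 := by
    have : ((2 : ℕ) : F) ≠ 0 := by
      rw [Ne, CharP.cast_eq_zero_iff F p 2]
      intro h
      exact hp2 ((Nat.prime_dvd_prime_iff_eq hp Nat.prime_two).mp h)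
    simpa using this
  refine ⟨Set.range (fun x : F => (x, x ^ 2)), fun g => ⟨?_, ?_⟩⟩
  · obtain ⟨s, hs⟩ := IsAlgClosed.exists_pow_nat_eq (2 * g.2 - g.1 ^ 2) (n := 2) (by norm_num)
    refine ⟨((g.1 + s) / 2, ((g.1 + s) / 2) ^ 2), ⟨_, rfl⟩,
      ((g.1 - s) / 2, ((g.1 - s) / 2) ^ 2), ⟨_, rfl⟩, ?_⟩
    have hb : ((g.1 + s) / 2) ^ 2 + ((g.1 - s) / 2) ^ 2 = g.2 := by
      field_simp
      linear_combination 2 * hs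
    have ha : (g.1 + s) / 2 + (g.1 - s) / 2 = g.1 := by field_simp; ring
    ext
    · simpa using ha
    · simpa using hb
  · rintro s ⟨x, rfl⟩ t ⟨y, rfl⟩ s' ⟨x', rfl⟩ t' ⟨y', rfl⟩ h h'
    have h1 : x + y = g.1 := congrArg Prod.fst h
    have h2' : x ^ 2 + y ^ 2 = g.2 := congrArg Prod.snd h
    have h1' : x' + y' = g.1 := congrArg Prod.fst h'
    have h2'' : x' ^ 2 + y' ^ 2 = g.2 := congrArg Prod.snd h'
    have hsum : x' + y' = x + y := by rw [h1, h1']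
    have hprod : x' * y' = x * y := by
      have h2sq : 2 * (x' * y') = 2 * (x * y) := by
        linear_combination h2' - h2'' + (x' + y' + x + y) * hsum
      exact mul_left_cancel₀ h2 h2sq
    have key : (x' - x) * (x' - y) = 0 := by
      linear_combination x' * hsum - hprod
    rcases mul_eq_zero.mp key with hx | hx
    · left
      have hxx : x' = x := sub_eq_zero.mp hx
      have hyy : y' = y := by
        rw [hxx] at hsum
        linear_combination hsum
      subst hxx hyy
      exact ⟨rfl, rfl⟩
    · right
      have hxx : x' = y := sub_eq_zero.mp hx
      have hyy : y' = x := by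
        rw [hxx] at hsum
        linear_combination hsum
      subst hxx hyy
      exact ⟨rfl, rfl⟩
end

section
/- Let F be an abelian group of exponent 3 possessing a perfect basis S, and let G = F ⊕ Z/2Z with h the element of order 2. Then T = S ∪ (h + S) is a basis of G such that every element of G has at most two representations (up to order of summands) as a sum of two elements of T. -/
/-- if `F` has exponent 3 and `S` is a perfect basis of `F`, then
`T = S ∪ (h + S)` in `G = F × ZMod 2` (with `h = (0,1)`) is a basis such that
every element has at most two representations up to order of summands. -/
theorem stmt_2 {F : Type*} [AddCommGroup F] (hexp : ∀ x : F, x + x + x = 0)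
    (S : Set F)
    (hbasis : ∀ g : F, ∃ s ∈ S, ∃ t ∈ S, s + t = g)
    (hperf : ∀ g : F, ∀ s ∈ S, ∀ t ∈ S, ∀ s' ∈ S, ∀ t' ∈ S,
      s + t = g → s' + t' = g → (s' = s ∧ t' = t) ∨ (s' = t ∧ t' = s))
    (T : Set (F × ZMod 2))
    (hT : T = {q | ∃ s ∈ S, q = (s, 0)} ∪ {q | ∃ s ∈ S, q = ((0 : F), (1 : ZMod 2)) + (s, 0)}) :
    (∀ g : F × ZMod 2, ∃ a ∈ T, ∃ b ∈ T, a + b = g) ∧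
    (∀ g : F × ZMod 2, ∃ r₁ r₂ : (F × ZMod 2) × (F × ZMod 2),
      ∀ a ∈ T, ∀ b ∈ T, a + b = g →
        (a, b) = r₁ ∨ (a, b) = r₁.swap ∨ (a, b) = r₂ ∨ (a, b) = r₂.swap) := by

  subst hT
  have h2 : ∀ z : ZMod 2, z = 0 ∨ z = 1 := by decide
  constructor
  · intro g
    obtain ⟨s, hs, t, ht, hst⟩ := hbasis g.1
    rcases h2 g.2 with h | h
    · refine ⟨(s, 0), Or.inl ⟨s, hs, rfl⟩, (t, 0), Or.inl ⟨t, ht, rfl⟩, ?_⟩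
      ext <;> simp [hst, h.symm]
    · refine ⟨(s, 0), Or.inl ⟨s, hs, rfl⟩, (0, 1) + (t, 0), Or.inr ⟨t, ht, rfl⟩, ?_⟩
      ext <;> simp [hst, h.symm]
  · intro g
    obtain ⟨s, hs, t, ht, hst⟩ := hbasis g.1
    refine ⟨if g.2 = 0 then ((s, 0), (t, 0)) else ((s, 0), (t, 1)),
            if g.2 = 0 then ((s, 1), (t, 1)) else ((s, 1), (t, 0)), ?_⟩
    intro a ha b hb hab
    rcases ha with ⟨u, hu, rfl⟩ | ⟨u, hu, rfl⟩ <;>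
      rcases hb with ⟨v, hv, rfl⟩ | ⟨v, hv, rfl⟩ <;>
      subst hab <;>
      [ (have hg1 : s + t = u + v := by simpa using hst);
        (have hg1 : s + t = u + v := by simpa using hst);
        (have hg1 : s + t = u + v := by simpa using hst);
        (have hg1 : s + t = u + v := by simpa using hst)] <;>
      rcases hperf _ s hs t ht u hu v hv hg1 rfl with ⟨rfl, rfl⟩ | ⟨rfl, rfl⟩ <;>
      simp [Prod.ext_iff, show (1 + 1 : ZMod 2) = 0 from by decide]
end

section
/- Let G = F ⊕ {0, h} where F is an abelian group of exponent 3 and h has order 2. Then G does not possess a perfect basis. -/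
/-- if `F` has exponent 3, then `G = F × ZMod 2` has no perfect
basis: no subset `T` such that every element of `G` has exactly one
representation, up to order of summands, as a sum of two elements of `T`. -/
theorem stmt_3 {F : Type*} [AddCommGroup F] (hexp : ∀ x : F, x + x + x = 0) :
    ¬ ∃ T : Set (F × ZMod 2), ∀ g : F × ZMod 2,
        (∃ s ∈ T, ∃ t ∈ T, s + t = g) ∧
        (∀ s ∈ T, ∀ t ∈ T, ∀ s' ∈ T, ∀ t' ∈ T, s + t = g → s' + t' = g →
          (s' = s ∧ t' = t) ∨ (s' = t ∧ t' = s)) := by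
  rintro ⟨T, hT⟩
  have hz : ∀ z : ZMod 2, z = 0 ∨ z = 1 := by decide
  -- key: any element of T with second coordinate 0 yields a contradiction
  have key : ∀ w ∈ T, w.2 = 0 → False := by
    intro w hw hw2
    obtain ⟨⟨a, ha, b, hb, hab⟩, -⟩ := hT (w.1 + w.1, 1)
    have inner : ∀ a ∈ T, ∀ b ∈ T, a + b = ((w.1 + w.1 : F), (1 : ZMod 2)) →
        a.2 = 0 → False := by
      intro a ha b hb hab ha2
      have h1 : a.1 + b.1 = w.1 + w.1 := congrArg Prod.fst hab
      have h2 : a.2 + b.2 = 1 := congrArg Prod.snd hab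
      have hb2 : b.2 = 1 := by rwa [ha2, zero_add] at h2
      have hbb : b + b = a + w := by
        have hfst : b.1 + b.1 = a.1 + w.1 := by
          have e : (b.1 + b.1) - (a.1 + w.1)
              = (b.1 + b.1 + b.1) - (w.1 + w.1 + w.1)
                - ((a.1 + b.1) - (w.1 + w.1)) := by abel
          have h0 : (b.1 + b.1) - (a.1 + w.1) = 0 := by
            rw [e, h1, hexp b.1, hexp w.1]; abel
          exact sub_eq_zero.mp h0
        have hsnd : b.2 + b.2 = a.2 + w.2 := by
          rw [hb2, ha2, hw2]; decide
        exact Prod.ext hfst hsnd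
      obtain ⟨-, huniq⟩ := hT (a + w)
      have hcase := huniq a ha w hw b hb b hb rfl hbb
      have hbw : b = w := by rcases hcase with ⟨_, h⟩ | ⟨h, _⟩ <;> exact h
      rw [hbw, hw2] at hb2
      exact one_ne_zero hb2.symm
    rcases hz a.2 with ha2 | ha2
    · exact inner a ha b hb hab ha2
    · have h2 : a.2 + b.2 = 1 := congrArg Prod.snd hab
      rw [ha2] at h2
      have hb2 : b.2 = 0 := by
        rcases hz b.2 with h | h
        · exact h
        · rw [h] at h2; exact absurd h2 (by decide)
      exact inner b hb a ha (by rw [add_comm]; exact hab) hb2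
  -- get an element of T with second coordinate 0 from the representation of (0,1)
  obtain ⟨⟨u, hu, v, hv, huv⟩, -⟩ := hT (0, 1)
  have h2 : u.2 + v.2 = 1 := congrArg Prod.snd huv
  rcases hz u.2 with hu2 | hu2
  · exact key u hu hu2
  · rw [hu2] at h2
    have hv2 : v.2 = 0 := by
      rcases hz v.2 with h | h
      · exact h
      · rw [h] at h2; exact absurd h2 (by decide)
    exact key v hv hv2
end

section
/- Let G be an abelian group such that 2G is infinite, and let A, B ⊆ G satisfy max(|A|, |B|) < min(|2G|, |3G|) (as cardinals). Then there exists s ∈ G with 2s ∉ A and 3s ∉ B. -/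
/-- if `2G` is infinite and `max(|A|,|B|) < min(|2G|,|3G|)`,
then there exists `s ∈ G` with `2s ∉ A` and `3s ∉ B`. -/
theorem stmt_4 {G : Type*} [AddCommGroup G] (A B : Set G)
    (hinf : ({x : G | ∃ g : G, x = 2 • g}).Infinite)
    (hcard : max (Cardinal.mk A) (Cardinal.mk B) <
      min (Cardinal.mk {x : G | ∃ g : G, x = 2 • g})
          (Cardinal.mk {x : G | ∃ g : G, x = 3 • g})) :
    ∃ s : G, 2 • s ∉ A ∧ 3 • s ∉ B := by
  classical
  by_contra hcon
  push_neg at hcon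
  -- hcon : ∀ s, 2 • s ∉ A → 3 • s ∈ B
  have hA2 : Cardinal.mk A < Cardinal.mk {x : G | ∃ g : G, x = 2 • g} :=
    (le_max_left _ _).trans_lt (hcard.trans_le (min_le_left _ _))
  have hB2 : Cardinal.mk B < Cardinal.mk {x : G | ∃ g : G, x = 2 • g} :=
    (le_max_right _ _).trans_lt (hcard.trans_le (min_le_left _ _))
  have hB3 : Cardinal.mk B < Cardinal.mk {x : G | ∃ g : G, x = 3 • g} :=
    (le_max_right _ _).trans_lt (hcard.trans_le (min_le_right _ _))
  obtain ⟨t₀, ht₀⟩ : ∃ t : G, 2 • t ∉ A := by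
    by_contra hno
    push_neg at hno
    have hsub : {x : G | ∃ g : G, x = 2 • g} ⊆ A := by
      rintro x ⟨g, rfl⟩; exact hno g
    exact absurd (Cardinal.mk_le_mk_of_subset hsub) hA2.not_ge
  obtain ⟨t₁, ht₁⟩ : ∃ t : G, 3 • t ∉ B := by
    by_contra hno
    push_neg at hno
    have hsub : {x : G | ∃ g : G, x = 3 • g} ⊆ B := by
      rintro x ⟨g, rfl⟩; exact hno g
    exact absurd (Cardinal.mk_le_mk_of_subset hsub) hB3.not_ge
  set sec2 : G → G := fun x => if h : ∃ g : G, x = 2 • g then h.choose else 0 with hsec2def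
  set sec3 : G → G := fun x => if h : ∃ g : G, x = 3 • g then h.choose else 0 with hsec3def
  have hsec2 : ∀ s : G, 2 • sec2 (2 • s) = 2 • s := by
    intro s
    have h : ∃ g : G, 2 • s = 2 • g := ⟨s, rfl⟩
    simp only [hsec2def, dif_pos h]
    exact h.choose_spec.symm
  have hsec3 : ∀ s : G, 3 • sec3 (3 • s) = 3 • s := by
    intro s
    have h : ∃ g : G, 3 • s = 3 • g := ⟨s, rfl⟩
    simp only [hsec3def, dif_pos h]
    exact h.choose_spec.symm
  have hu2 : ∀ s : G, 2 • (s - sec2 (2 • s)) = 0 := by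
    intro s; rw [smul_sub, hsec2, sub_self]
  have hv3 : ∀ s : G, 3 • (s - sec3 (3 • s)) = 0 := by
    intro s; rw [smul_sub, hsec3, sub_self]
  -- translates of 2-torsion elements land in B
  have hBmem : ∀ u : G, 2 • u = 0 → 3 • t₀ + u ∈ B := by
    intro u hu
    have h2 : 2 • (t₀ + u) ∉ A := by
      rw [smul_add, hu, add_zero]; exact ht₀
    have h3 := hcon (t₀ + u) h2
    have e3 : (3 : ℕ) • u = u := by
      rw [show (3 : ℕ) = 2 + 1 by norm_num, add_nsmul, hu, one_nsmul, zero_add]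
    rwa [smul_add, e3] at h3
  -- translates of 3-torsion elements land in A
  have hAmem : ∀ v : G, 3 • v = 0 → 2 • t₁ - v ∈ A := by
    intro v hv
    by_contra hn
    have e2 : (2 : ℕ) • v = -v := by
      have : (3 : ℕ) • v = (2 : ℕ) • v + v := by
        rw [show (3 : ℕ) = 2 + 1 by norm_num, add_nsmul, one_nsmul]
      rw [this] at hv
      linear_combination (norm := abel) hv
    have h2 : 2 • (t₁ + v) ∉ A := by
      rw [smul_add, e2, ← sub_eq_add_neg]; exact hn
    have h3 := hcon (t₁ + v) h2
    rw [smul_add, hv, add_zero] at h3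
    exact ht₁ h3
  -- the injection
  set f : G → (A × B) ⊕ (A × B) := fun s =>
    if h2 : 2 • s ∈ A then
      Sum.inl (⟨2 • s, h2⟩, ⟨3 • t₀ + (s - sec2 (2 • s)), hBmem _ (hu2 s)⟩)
    else
      Sum.inr (⟨2 • t₁ - (s - sec3 (3 • s)), hAmem _ (hv3 s)⟩, ⟨3 • s, hcon s h2⟩)
    with hfdef
  have hf : Function.Injective f := by
    intro s s' h
    by_cases h2 : 2 • s ∈ A <;> by_cases h2' : 2 • s' ∈ A <;>
      simp only [hfdef, dif_pos, dif_neg, h2, h2', dite_true, dite_false,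
        Sum.inl.injEq, Sum.inr.injEq, Prod.mk.injEq, Subtype.mk.injEq] at h
    · obtain ⟨e1, e2⟩ := h
      have hsec : sec2 (2 • s) = sec2 (2 • s') := by rw [e1]
      have h5 : s - sec2 (2 • s) = s' - sec2 (2 • s') := add_left_cancel e2
      rw [hsec, sub_left_inj] at h5
      exact h5
    · exact absurd h (by simp)
    · exact absurd h (by simp)
    · obtain ⟨e1, e3⟩ := h
      have hsec : sec3 (3 • s) = sec3 (3 • s') := by rw [e3]
      have h5 : s - sec3 (3 • s) = s' - sec3 (3 • s') := sub_right_inj.mp e1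
      rw [hsec, sub_left_inj] at h5
      exact h5
  have hGle : Cardinal.mk G ≤ Cardinal.mk ((A × B) ⊕ (A × B)) :=
    Cardinal.mk_le_of_injective hf
  have hsum : Cardinal.mk ((A × B) ⊕ (A × B)) =
      Cardinal.mk A * Cardinal.mk B + Cardinal.mk A * Cardinal.mk B := by
    simp
  have haleph : Cardinal.aleph0 ≤ Cardinal.mk {x : G | ∃ g : G, x = 2 • g} := by
    have := hinf.to_subtype
    exact Cardinal.aleph0_le_mk _
  have hlt : Cardinal.mk A * Cardinal.mk B + Cardinal.mk A * Cardinal.mk B <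
      Cardinal.mk {x : G | ∃ g : G, x = 2 • g} :=
    Cardinal.add_lt_of_lt haleph (Cardinal.mul_lt_of_lt haleph hA2 hB2)
      (Cardinal.mul_lt_of_lt haleph hA2 hB2)
  have h2G : Cardinal.mk {x : G | ∃ g : G, x = 2 • g} ≤ Cardinal.mk G :=
    Cardinal.mk_set_le _
  rw [hsum] at hGle
  exact absurd ((h2G.trans hGle)) hlt.not_ge
end

section
/- Let G be an abelian group, g ∈ G, and let S ⊆ G be a set such that at most one representation (up to order) of each element as a sum of two elements of S exists, with g ∉ S + S. If s ∈ G and t = g − s satisfy conditions (b)–(e) of the recursive construction, then in S' = S ∪ {s, t} the element g has exactly one representation as a sum of two elements of S', namely g = s + t. -/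
/-- At most one representation of every element, up to order of summands. -/
def UniqueReps {G : Type*} [AddCommGroup G] (S : Set G) : Prop :=
  ∀ g : G, ∀ a ∈ S, ∀ b ∈ S, ∀ a' ∈ S, ∀ b' ∈ S,
    a + b = g → a' + b' = g → (a' = a ∧ b' = b) ∨ (a' = b ∧ b' = a)

/-- if `S` has the unique-representation property, `g ∉ S + S`,
and `s`, `t = g − s` satisfy conditions (b)–(e), then in `S' = S ∪ {s, t}` the
element `g` has exactly one representation, namely `g = s + t`. -/
theorem stmt_19 {G : Type*} [AddCommGroup G] (S : Set G) (hS : UniqueReps S)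
    (g : G) (hg : ¬ ∃ a ∈ S, ∃ b ∈ S, a + b = g)
    (s t : G) (hst : t = g - s)
    (hb : s ∉ {x : G | ∃ a ∈ S, ∃ b ∈ S, ∃ c ∈ S, x = a + b - c} ∧
          t ∉ {x : G | ∃ a ∈ S, ∃ b ∈ S, ∃ c ∈ S, x = a + b - c})
    (hc : 2 • s ∉ {x : G | ∃ a ∈ S, ∃ b ∈ S, x = a + b} ∧
          2 • t ∉ {x : G | ∃ a ∈ S, ∃ b ∈ S, x = a + b})
    (hd : s - t ∉ {x : G | ∃ a ∈ S, ∃ b ∈ S, x = a - b})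
    (he : 2 • s - t ∉ S ∧ 2 • t - s ∉ S) :
    (s ∈ S ∪ {s, t} ∧ t ∈ S ∪ {s, t} ∧ s + t = g) ∧
    (∀ a ∈ S ∪ {s, t}, ∀ b ∈ S ∪ {s, t}, a + b = g →
      (a = s ∧ b = t) ∨ (a = t ∧ b = s)) := by
  have hstg : s + t = g := by rw [hst]; abel
  refine ⟨⟨Or.inr (by simp), Or.inr (by simp), hstg⟩, ?_⟩
  intro a ha b hbm hab
  rcases ha with ha | ha
  · rcases hbm with hbm | hbm
    · exact absurd ⟨a, ha, b, hbm, hab⟩ hg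
    · simp only [Set.mem_insert_iff, Set.mem_singleton_iff] at hbm
      rcases hbm with hbs | hbt
      · -- b = s, a ∈ S, a + s = g so t = a
        exact absurd ⟨a, ha, a, ha, a, ha, by rw [hst, ← hab, hbs]; abel⟩ hb.2
      · -- b = t, a ∈ S : s = a
        have h : s = a := by
          have h2 : s + t = a + t := by rw [hstg, ← hab, hbt]
          exact add_right_cancel h2
        exact absurd ⟨a, ha, a, ha, a, ha, by rw [h]; abel⟩ hb.1
  · simp only [Set.mem_insert_iff, Set.mem_singleton_iff] at ha
    rcases ha with has | hat
    · rcases hbm with hbm | hbm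
      · -- a = s, b ∈ S: t = b
        have h : t = b := by
          have h2 : s + t = s + b := by rw [hstg, ← hab, has]
          exact add_left_cancel h2
        exact absurd ⟨b, hbm, b, hbm, b, hbm, by rw [h]; abel⟩ hb.2
      · simp only [Set.mem_insert_iff, Set.mem_singleton_iff] at hbm
        rcases hbm with hbs | hbt
        · -- a = s, b = s: s = t
          have h : t = s := by
            have h2 : s + t = s + s := by rw [hstg, ← hab, has, hbs]
            exact add_left_cancel h2
          exact Or.inl ⟨has, hbs.trans h.symm⟩
        · exact Or.inl ⟨has, hbt⟩
    · rcases hbm with hbm | hbm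
      · -- a = t, b ∈ S: s = b
        have h : s = b := by
          have h2 : s + t = b + t := by rw [hstg, ← hab, hat]; abel
          exact add_right_cancel h2
        exact absurd ⟨b, hbm, b, hbm, b, hbm, by rw [h]; abel⟩ hb.1
      · simp only [Set.mem_insert_iff, Set.mem_singleton_iff] at hbm
        rcases hbm with hbs | hbt
        · exact Or.inr ⟨hat, hbs⟩
        · -- a = t, b = t: s = t
          have h : s = t := by
            have h2 : s + t = t + t := by rw [hstg, ← hab, hat, hbt]
            exact add_right_cancel h2
          exact Or.inr ⟨hat, hbt.trans h.symm⟩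
end
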